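/- arXiv:2503.00039 — 8 statements merged into one kernel-verified Lean document; each statement's English description precedes it below -/
import Mathlib

section
/- Standard deviation causes ranking reversal under scaling: for U = (1/10,2/10,3/10,4/10,5/10) and V = (1/10,1/10,1/10,1/10,1/10), with F(X) = (1 − SD(X))·Sum(X), we have F(U) > F(V); but for U' = 10·U = (1,2,3,4,5) and V' = 10·V, we have F(V') > F(U'). -/
noncomputable def sumL (l : List ℝ) : ℝ := l.sum

noncomputable def sdL (l : List ℝ) : ℝ :=
  Real.sqrt (((l.map (fun x => (x - l.sum / l.length) ^ 2)).sum) / l.length)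

noncomputable def Fsd (l : List ℝ) : ℝ := (1 - sdL l) * sumL l

/-- Standard-deviation-penalized welfare reverses under scaling by 10. -/
theorem sd_penalty_reversal :
    Fsd [1/10, 2/10, 3/10, 4/10, 5/10] > Fsd [1/10, 1/10, 1/10, 1/10, 1/10] ∧
    Fsd [1, 1, 1, 1, 1] > Fsd [1, 2, 3, 4, 5] := by
  have h1 : sdL [1/10, 2/10, 3/10, 4/10, 5/10] = Real.sqrt (1/50) := by
    unfold sdL; norm_num
  have h2 : sdL [(1:ℝ)/10, 1/10, 1/10, 1/10, 1/10] = 0 := by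
    unfold sdL; norm_num
  have h3 : sdL [(1:ℝ), 1, 1, 1, 1] = 0 := by
    unfold sdL; norm_num
  have h4 : sdL [(1:ℝ), 2, 3, 4, 5] = Real.sqrt 2 := by
    unfold sdL; norm_num
  have hs1 : Real.sqrt (1/50) < 2/3 := by
    rw [show (2:ℝ)/3 = Real.sqrt ((2/3)^2) by rw [Real.sqrt_sq]; norm_num]
    apply Real.sqrt_lt_sqrt <;> norm_num
  have hs2 : (2:ℝ)/3 < Real.sqrt 2 := by
    rw [show (2:ℝ)/3 = Real.sqrt ((2/3)^2) by rw [Real.sqrt_sq]; norm_num]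
    apply Real.sqrt_lt_sqrt <;> norm_num
  constructor <;> unfold Fsd sumL <;>
    simp only [h1, h2, h3, h4, List.sum_cons, List.sum_nil] <;> nlinarith
end

section
/- Limit collapse of individual-ranking-based discounting to dictatorship of the worst-off: let A = (u_1,…,u_n) be a nondecreasing utility profile and A^λ its λ-fold replication (each utility repeated λ times, sorted). Define W(A^λ) = Σ_{i=1}^{nλ} k^{i−1} a_{(i)} where a_{(i)} is the i-th smallest entry and k ∈ (0,1). Then lim_{λ→∞} W(A^λ) = u_1/(1−k). -/
open Finset Filter

/-- Rank-discounted welfare of the λ-fold replication of the sorted profile u. -/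
noncomputable def Wrep (n : ℕ) (u : Fin n → ℝ) (k : ℝ) (lam : ℕ) : ℝ :=
  ∑ j : Fin n, k ^ ((j : ℕ) * lam) * u j * (∑ t ∈ Finset.range lam, k ^ t)

/-- As the replication factor λ → ∞, IRBD welfare of A^λ tends to u₁/(1−k):
dictatorship of the worst-off. -/
theorem irbd_limit_collapse (n : ℕ) (hn : 1 ≤ n) (u : Fin n → ℝ)
    (hu : Monotone u) (k : ℝ) (hk0 : 0 < k) (hk1 : k < 1) :
    Tendsto (fun lam => Wrep n u k lam) atTop
      (nhds (u ⟨0, by omega⟩ / (1 - k))) := by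
  have hS : Tendsto (fun lam => ∑ t ∈ Finset.range lam, k ^ t) atTop (nhds (1 / (1 - k))) := by
    have := (hasSum_geometric_of_lt_one hk0.le hk1).tendsto_sum_nat
    simpa [one_div] using this
  have key : ∀ j : Fin n,
      Tendsto (fun lam => k ^ ((j : ℕ) * lam) * u j * (∑ t ∈ Finset.range lam, k ^ t)) atTop
        (nhds (if (j : ℕ) = 0 then u j / (1 - k) else 0)) := by
    intro j
    by_cases hj : (j : ℕ) = 0
    · simp only [hj, if_pos, zero_mul, pow_zero, one_mul]
      have := hS.const_mul (u j)
      simpa [div_eq_mul_inv, one_div, mul_comm] using this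
    · simp only [hj, if_neg, not_false_iff]
      have h1 : Tendsto (fun lam : ℕ => k ^ ((j : ℕ) * lam)) atTop (nhds 0) := by
        have hkj : |k ^ (j : ℕ)| < 1 := by
          rw [abs_of_pos (pow_pos hk0 _)]
          exact pow_lt_one₀ hk0.le hk1 hj
        simpa [pow_mul] using tendsto_pow_atTop_nhds_zero_of_abs_lt_one hkj
      have := (h1.mul_const (u j)).mul hS
      simpa using this
  have hsum := tendsto_finset_sum Finset.univ (fun j _ => key j)
  have heq : ∑ j : Fin n, (if (j : ℕ) = 0 then u j / (1 - k) else 0)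
      = u ⟨0, by omega⟩ / (1 - k) := by
    rw [Finset.sum_eq_single (⟨0, by omega⟩ : Fin n)]
    · simp
    · intro j _ hj; rw [if_neg]; intro h; exact hj (Fin.ext h)
    · simp
  rw [heq] at hsum
  simpa [Wrep] using hsum
end

section
/- Strong failure of utility-level-based discounting: fix k ∈ (0,1) and N divisible by 2 and by m. Let A assign utility 1 to N/2 people and utility 10 to N/2 people, so W_ULBD(A) = N/2 + 5Nk. Let B assign utilities u_j = 9 + (j−1)/(m−1) to N/m people each, j = 1,…,m, so W_ULBD(B) = (N/m) Σ_{j=1}^m k^{j−1} u_j. Then there exists m₀ such that for all m ≥ m₀, W_ULBD(A) > W_ULBD(B), even though every individual in B has utility at least 9 > 1 for the worst-off in A and B has higher total utility. -/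
open Finset

/-- ULBD welfare of the almost-equal distribution B with m utility levels
u_j = 9 + (j−1)/(m−1), each held by N/m people (here indexed j = 0,…,m−1). -/
noncomputable def WB (N : ℝ) (k : ℝ) (m : ℕ) : ℝ :=
  (N / m) * ∑ j ∈ Finset.range m, k ^ j * (9 + (j : ℝ) / ((m : ℝ) - 1))

/-- Strong failure of ULBD: the highly unequal distribution A (half at 1, half at 10,
ULBD welfare N/2 + 5Nk) is eventually preferred to the almost-equal distribution B,
even though B is almost equal, everyone in B has utility ≥ 9, and B has higher
total utility than A. -/
theorem ulbd_strong_failure (N k : ℝ) (hN : 0 < N) (hk0 : 0 < k) (hk1 : k < 1) :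
    ∃ m₀ : ℕ, ∀ m ≥ m₀, 2 ≤ m →
      (N / 2 + 5 * N * k > WB N k m ∧
        (N / m) * ∑ j ∈ Finset.range m, (9 + (j : ℝ) / ((m : ℝ) - 1)) >
          (N / 2) * 1 + (N / 2) * 10) := by
  obtain ⟨m₀, hm₀⟩ : ∃ m₀ : ℕ, 20 / (1 - k) < m₀ := exists_nat_gt _
  refine ⟨m₀, fun m hm hm2 => ?_⟩
  have hk1' : (0:ℝ) < 1 - k := by linarith
  have hmR : (20 / (1 - k) : ℝ) < m := lt_of_lt_of_le hm₀ (by exact_mod_cast hm)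
  have hm2R : (2:ℝ) ≤ m := by exact_mod_cast hm2
  have hm1 : (0:ℝ) < (m:ℝ) - 1 := by linarith
  have hm0 : (0:ℝ) < m := by linarith
  constructor
  · -- bound each term by 10 * k^j
    have hsum : ∑ j ∈ Finset.range m, k ^ j * (9 + (j : ℝ) / ((m : ℝ) - 1))
        ≤ ∑ j ∈ Finset.range m, 10 * k ^ j := by
      apply Finset.sum_le_sum
      intro j hj
      have hj' : (j : ℝ) ≤ (m : ℝ) - 1 := by
        have : (j : ℝ) + 1 ≤ m := by exact_mod_cast Finset.mem_range.mp hj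
        linarith
      have h1 : (j : ℝ) / ((m : ℝ) - 1) ≤ 1 := by
        rw [div_le_one hm1]; exact hj'
      have hkj : (0:ℝ) ≤ k ^ j := by positivity
      nlinarith
    have hgeom : ∑ j ∈ Finset.range m, 10 * k ^ j ≤ 10 / (1 - k) := by
      rw [← Finset.mul_sum]
      have hkne : k ≠ 1 := by linarith
      rw [geom_sum_eq hkne]
      have hkm : (0:ℝ) < k ^ m := by positivity
      have heq : (k ^ m - 1) / (k - 1) = (1 - k ^ m) / (1 - k) := by
        rw [← neg_div_neg_eq]; ring_nf
      rw [heq, mul_div_assoc']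
      rw [div_le_div_iff_of_pos_right hk1']
      nlinarith
    have hWB : WB N k m ≤ (N / m) * (10 / (1 - k)) := by
      unfold WB
      have hNm : (0:ℝ) ≤ N / m := by positivity
      exact mul_le_mul_of_nonneg_left (hsum.trans hgeom) hNm
    have hfin : (N / m) * (10 / (1 - k)) < N / 2 := by
      rw [div_mul_div_comm, div_lt_div_iff₀ (by positivity) (by norm_num)]
      have := mul_lt_mul_of_pos_left hmR hN
      rw [← mul_div_assoc, div_lt_iff₀ hk1'] at this
      nlinarith
    nlinarith
  · have hsum : ∑ j ∈ Finset.range m, (9 + (j : ℝ) / ((m : ℝ) - 1))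
        = 9 * m + (m : ℝ) / 2 := by
      rw [Finset.sum_add_distrib, Finset.sum_const, ← Finset.sum_div]
      have hid : (∑ j ∈ Finset.range m, (j : ℝ)) = (m : ℝ) * ((m : ℝ) - 1) / 2 := by
        have h2 : (∑ j ∈ Finset.range m, j) * 2 = m * (m - 1) := Finset.sum_range_id_mul_two m
        have h3 : ((∑ j ∈ Finset.range m, j : ℕ) : ℝ) * 2 = (m : ℝ) * ((m : ℝ) - 1) := by
          have : ((m * (m - 1) : ℕ) : ℝ) = (m : ℝ) * ((m : ℝ) - 1) := by
            push_cast [Nat.cast_sub (by omega : 1 ≤ m)]; ring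
          rw [← this, ← h2]; push_cast; ring
        push_cast at h3 ⊢
        linarith
      rw [hid, Finset.card_range]
      field_simp
      ring
    rw [hsum]
    have : (N / m) * (9 * m + (m : ℝ) / 2) = N * 19 / 2 := by
      field_simp
      ring
    rw [this]
    nlinarith
end

section
/- Uniqueness of expected-utility representation up to positive affine transformation: if u, v : X → ℝ are two functions on a finite set X such that for all lotteries (probability distributions) p, q on X, Σ p(x)u(x) ≥ Σ q(x)u(x) ⟺ Σ p(x)v(x) ≥ Σ q(x)v(x), and u is non-constant, then there exist constants a > 0 and b ∈ ℝ with u(x) = a·v(x) + b for all x ∈ X. -/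
open Finset

/-- A lottery on a finite type X: nonnegative weights summing to 1. -/
def IsLottery {X : Type*} [Fintype X] (p : X → ℝ) : Prop :=
  (∀ x, 0 ≤ p x) ∧ ∑ x, p x = 1

section aux

variable {X : Type*} [Fintype X] [DecidableEq X]

/-- point mass -/
def eud (x : X) : X → ℝ := fun z => if z = x then 1 else 0

lemma eud_lottery (x : X) : IsLottery (eud x) := by
  constructor
  · intro z; unfold eud; split <;> norm_num
  · simp [eud]

lemma eud_sum (x : X) (u : X → ℝ) : ∑ z, eud x z * u z = u x := by
  simp [eud, ite_mul]

lemma mix_lottery (x y : X) {t : ℝ} (h0 : 0 ≤ t) (h1 : t ≤ 1) :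
    IsLottery (fun z => t * eud x z + (1 - t) * eud y z) := by
  constructor
  · intro z
    have hx := (eud_lottery x).1 z
    have hy := (eud_lottery y).1 z
    have : (0:ℝ) ≤ 1 - t := by linarith
    positivity
  · rw [Finset.sum_add_distrib, ← Finset.mul_sum, ← Finset.mul_sum,
      (eud_lottery x).2, (eud_lottery y).2]
    ring

lemma mix_sum (x y : X) (t : ℝ) (u : X → ℝ) :
    ∑ z, (t * eud x z + (1 - t) * eud y z) * u z = t * u x + (1 - t) * u y := by
  simp only [add_mul, Finset.sum_add_distrib, mul_assoc, ← Finset.mul_sum, eud_sum]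

end aux

/-- Uniqueness of the expected-utility representation up to positive affine
transformation. -/
theorem eu_unique_up_to_affine {X : Type*} [Fintype X] [Nonempty X]
    (u v : X → ℝ)
    (hrep : ∀ p q : X → ℝ, IsLottery p → IsLottery q →
      ((∑ x, p x * u x ≥ ∑ x, q x * u x) ↔ (∑ x, p x * v x ≥ ∑ x, q x * v x)))
    (hnc : ∃ x y : X, u x ≠ u y) :
    ∃ a : ℝ, 0 < a ∧ ∃ b : ℝ, ∀ x, u x = a * v x + b := by
  classical
  -- point-mass comparison
  have hpt : ∀ x y : X, u x ≥ u y ↔ v x ≥ v y := by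
    intro x y
    have := hrep (eud x) (eud y) (eud_lottery x) (eud_lottery y)
    simpa [eud_sum] using this
  -- argmin and argmax of u
  obtain ⟨x₀, -, hmin⟩ := Finset.exists_min_image Finset.univ u ⟨Classical.arbitrary X, Finset.mem_univ _⟩
  obtain ⟨x₁, -, hmax⟩ := Finset.exists_max_image Finset.univ u ⟨Classical.arbitrary X, Finset.mem_univ _⟩
  simp only [Finset.mem_univ, forall_true_left, true_implies] at hmin hmax
  have hne : u x₀ < u x₁ := by
    obtain ⟨x, y, hxy⟩ := hnc
    rcases lt_or_ge (u x₀) (u x₁) with h | h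
    · exact h
    · exfalso
      have h1 := le_trans (hmax x) (le_trans h (hmin x))
      have h2 := le_trans (hmax y) (le_trans h (hmin y))
      have h3 := le_trans (hmax x) (le_trans h (hmin y))
      exact hxy (le_antisymm (le_trans (hmax x) (le_trans h (hmin y)))
        (le_trans (hmax y) (le_trans h (hmin x))))
  have hvne : v x₀ < v x₁ := by
    rcases lt_or_ge (v x₀) (v x₁) with h | h
    · exact h
    · exact absurd ((hpt x₀ x₁).2 h) (not_le.mpr hne)
  -- key: v x is the convex combination with the same weight
  have key : ∀ x : X, (u x - u x₀) * (v x₁ - v x₀) = (v x - v x₀) * (u x₁ - u x₀) := by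
    intro x
    set t : ℝ := (u x - u x₀) / (u x₁ - u x₀) with ht
    have hd : (0:ℝ) < u x₁ - u x₀ := by linarith
    have h0 : 0 ≤ t := div_nonneg (by linarith [hmin x]) hd.le
    have h1 : t ≤ 1 := by
      rw [div_le_one hd]; linarith [hmax x]
    have hu : t * u x₁ + (1 - t) * u x₀ = u x := by
      rw [ht]; field_simp
      ring
    have hL := mix_lottery x₁ x₀ h0 h1
    have h1' := (hrep _ (eud x) hL (eud_lottery x)).1 (by rw [mix_sum, eud_sum, hu])
    have h2' := (hrep (eud x) _ (eud_lottery x) hL).1 (by rw [mix_sum, eud_sum, hu])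
    rw [mix_sum, eud_sum] at h1' h2'
    have hv : t * v x₁ + (1 - t) * v x₀ = v x := le_antisymm h2' h1'
    have : (u x - u x₀) / (u x₁ - u x₀) * (v x₁ - v x₀) = v x - v x₀ := by
      rw [← hv]; ring
    field_simp at this
    linarith [this]
  refine ⟨(u x₁ - u x₀) / (v x₁ - v x₀), div_pos (by linarith) (by linarith), 
    u x₀ - (u x₁ - u x₀) / (v x₁ - v x₀) * v x₀, fun x => ?_⟩
  have hk := key x
  have hvd : v x₁ - v x₀ ≠ 0 := by linarith
  field_simp
  linarith [hk]
end

section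
/- Monotonicity threshold for the Gini-penalized social welfare function: let x_1 ≤ … ≤ x_n be positive reals with S = Σ x_i, and G(X) = (1/n)(n + 1 − 2·Σ_{j=1}^n (n+1−j)x_j / S) the Gini index. Then the partial derivative of F(X) = (1 − λG(X))·S with respect to the largest utility x_n is nonnegative for all such profiles if and only if λ ≤ n/(n−1); in particular λ ≤ 1 suffices for F to be nondecreasing in x_n uniformly in n. -/
open Finset

/-- Total utility S = Σ x_i. -/
noncomputable def Stot (n : ℕ) (x : Fin n → ℝ) : ℝ := ∑ i, x i

/-- Gini index of a sorted profile (0-indexed: coefficient (n − i) for the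
(i+1)-th smallest entry, i.e. (n+1−j) for j = 1,…,n). -/
noncomputable def Gini (n : ℕ) (x : Fin n → ℝ) : ℝ :=
  (1 / n) * ((n : ℝ) + 1 - 2 * (∑ i : Fin n, ((n : ℝ) - (i : ℕ)) * x i) / Stot n x)

/-- ∂G/∂x_n, the derivative of the Gini index in the largest entry:
(2/n)·(Σ_{j=1}^{n−1}(n−j)x_j)/S². -/
noncomputable def dGini (n : ℕ) (x : Fin n → ℝ) : ℝ :=
  (2 / n) * (∑ i : Fin n, ((n : ℝ) - 1 - (i : ℕ)) * x i) / (Stot n x) ^ 2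

lemma gini_key (n : ℕ) (hn : 2 ≤ n) (lam : ℝ) (x : Fin n → ℝ) (hx : ∀ i, 0 < x i) :
    1 - lam * Gini n x - lam * Stot n x * dGini n x = 1 - lam * ((n : ℝ) - 1) / n := by
  have hS : 0 < Stot n x := by
    apply Finset.sum_pos (fun i _ => hx i)
    have : Nonempty (Fin n) := Fin.pos_iff_nonempty.mp (by omega); exact Finset.univ_nonempty
  have hS0 : Stot n x ≠ 0 := ne_of_gt hS
  have hn0 : (n : ℝ) ≠ 0 := by positivity
  have hA : (∑ i : Fin n, ((n : ℝ) - (i : ℕ)) * x i)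
      = (∑ i : Fin n, ((n : ℝ) - 1 - (i : ℕ)) * x i) + Stot n x := by
    rw [Stot, ← Finset.sum_add_distrib]
    exact Finset.sum_congr rfl (fun i _ => by ring)
  rw [Gini, dGini, hA]
  field_simp
  ring

/-- The Gini-penalized SWF F(X) = (1 − λG(X))·S is monotone in the largest
utility across all sorted positive profiles iff λ ≤ n/(n−1). -/
theorem gini_monotonicity_threshold (n : ℕ) (hn : 2 ≤ n) (lam : ℝ) :
    (∀ x : Fin n → ℝ, (∀ i, 0 < x i) → Monotone x →
      1 - lam * Gini n x - lam * Stot n x * dGini n x ≥ 0) ↔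
    lam ≤ (n : ℝ) / ((n : ℝ) - 1) := by
  have hn1 : (0 : ℝ) < (n : ℝ) - 1 := by
    have : (2 : ℝ) ≤ (n : ℝ) := by exact_mod_cast hn
    linarith
  have hnpos : (0 : ℝ) < (n : ℝ) := by linarith
  constructor
  · intro h
    have h1 := h (fun _ => 1) (fun _ => one_pos) (monotone_const)
    rw [gini_key n hn lam _ (fun _ => one_pos)] at h1
    rw [ge_iff_le, sub_nonneg, div_le_one hnpos] at h1
    rw [le_div_iff₀ hn1]
    linarith
  · intro h x hx hmono
    rw [gini_key n hn lam x hx, ge_iff_le, sub_nonneg, div_le_one hnpos]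
    rw [le_div_iff₀ hn1] at h
    linarith
end

section
/- Monotonicity of the Lorenz-integral functional requires a nonincreasing weight: let p : [0,1] → ℝ be continuous, and suppose that for all pairs of nondecreasing right-continuous step functions L₁ ≥ L₂ pointwise on [0,1) with L(0)=0, L(1)=1, we have ∫₀¹ p dL₁ ≥ ∫₀¹ p dL₂. Then p is nonincreasing on [0,1]. -/
/-- A Lorenz-like step function: a nondecreasing right-continuous (Stieltjes)
function with finite range, equal to 0 for u ≤ 0 and to 1 for u ≥ 1. -/
def IsLorenzStep (L : StieltjesFunction ℝ) : Prop :=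
  (Set.range L.toFun).Finite ∧ (∀ u : ℝ, u ≤ 0 → L u = 0) ∧ (∀ u : ℝ, 1 ≤ u → L u = 1)

open Set MeasureTheory

/-- The step function jumping from 0 to 1 at `a`. -/
noncomputable def stepL (a : ℝ) : StieltjesFunction ℝ where
  toFun := Set.indicator (Set.Ici a) 1
  mono' := fun x y hxy => by
    classical
    simp only [Set.indicator, Pi.one_apply, Set.mem_Ici]
    split_ifs with h1 h2 h2 <;> simp_all <;> linarith
  right_continuous' := fun x => by
    classical
    rcases le_or_gt a x with h | h
    · have hc : ∀ y ∈ Set.Ici x, Set.indicator (Set.Ici a) (1 : ℝ → ℝ) y = 1 := by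
        intro y hy
        exact Set.indicator_of_mem (le_trans h hy) 1
      exact ContinuousWithinAt.congr continuousWithinAt_const hc (hc x Set.self_mem_Ici)
    · have hnhd : Set.Ico x a ∈ nhdsWithin x (Set.Ici x) :=
        Ico_mem_nhdsGE_of_mem ⟨le_rfl, h⟩
      apply ContinuousWithinAt.congr_of_eventuallyEq continuousWithinAt_const
      · filter_upwards [hnhd] with y hy
        exact Set.indicator_of_notMem (not_le.2 hy.2) 1
      · exact Set.indicator_of_notMem (not_le.2 h) 1

lemma stepL_apply (a u : ℝ) : stepL a u = if a ≤ u then 1 else 0 := by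
  simp [stepL, Set.indicator, Set.mem_Ici]

lemma stepL_measure (a : ℝ) : (stepL a).measure = Measure.dirac a := by
  refine Measure.ext_of_Ioc _ _ (fun x y hxy => ?_)
  rw [StieltjesFunction.measure_Ioc, Measure.dirac_apply' _ measurableSet_Ioc,
    stepL_apply, stepL_apply]
  by_cases h1 : a ≤ x
  · rw [if_pos h1, if_pos (h1.trans hxy.le),
      Set.indicator_of_notMem (fun (h : a ∈ Set.Ioc x y) => absurd h1 (not_le.2 h.1))]
    simp
  · by_cases h2 : a ≤ y
    · rw [if_pos h2, if_neg h1, Set.indicator_of_mem (Set.mem_Ioc.2 ⟨not_le.1 h1, h2⟩)]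
      simp
    · rw [if_neg h1, if_neg h2,
        Set.indicator_of_notMem (fun (h : a ∈ Set.Ioc x y) => absurd h.2 h2)]
      simp

lemma stepL_isLorenzStep {a : ℝ} (ha : 0 < a) (ha1 : a ≤ 1) : IsLorenzStep (stepL a) := by
  refine ⟨?_, fun u hu => ?_, fun u hu => ?_⟩
  · apply Set.Finite.subset ((Set.finite_singleton (1:ℝ)).insert 0)
    rintro _ ⟨u, rfl⟩
    show stepL a u ∈ _
    rw [stepL_apply]; split_ifs <;> simp
  · rw [stepL_apply, if_neg (by linarith)]
  · rw [stepL_apply, if_pos (by linarith)]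

lemma key_ineq (p : ℝ → ℝ)
    (hmono : ∀ L₁ L₂ : StieltjesFunction ℝ, IsLorenzStep L₁ → IsLorenzStep L₂ →
      (∀ u ∈ Set.Ico (0 : ℝ) 1, L₁ u ≥ L₂ u) →
      (∫ u in Set.Icc (0 : ℝ) 1, p u ∂L₁.measure) ≥
        ∫ u in Set.Icc (0 : ℝ) 1, p u ∂L₂.measure)
    {a b : ℝ} (ha : 0 < a) (hab : a ≤ b) (hb : b ≤ 1) : p b ≤ p a := by
  classical
  have hA : a ∈ Set.Icc (0:ℝ) 1 := ⟨ha.le, hab.trans hb⟩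
  have hB : b ∈ Set.Icc (0:ℝ) 1 := ⟨(ha.trans_le hab).le, hb⟩
  have h := hmono (stepL a) (stepL b) (stepL_isLorenzStep ha (hab.trans hb))
    (stepL_isLorenzStep (ha.trans_le hab) hb) ?_
  · rw [stepL_measure, stepL_measure, setIntegral_dirac, setIntegral_dirac] at h
    simpa [hA, hB] using h
  · intro u _
    show stepL a u ≥ stepL b u
    rw [stepL_apply, stepL_apply]
    rcases le_or_gt b u with hbu | hbu
    · rw [if_pos (hab.trans hbu), if_pos hbu]
    · rw [if_neg (not_le.2 hbu)]
      split_ifs <;> norm_num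

/-- If the Stieltjes functional L ↦ ∫₀¹ p dL respects pointwise dominance of
Lorenz-like step functions on [0,1), then the continuous weight p must be
nonincreasing on [0,1]. -/
theorem weight_nonincreasing_of_monotone_functional (p : ℝ → ℝ)
    (hp : ContinuousOn p (Set.Icc 0 1))
    (hmono : ∀ L₁ L₂ : StieltjesFunction ℝ, IsLorenzStep L₁ → IsLorenzStep L₂ →
      (∀ u ∈ Set.Ico (0 : ℝ) 1, L₁ u ≥ L₂ u) →
      (∫ u in Set.Icc (0 : ℝ) 1, p u ∂L₁.measure) ≥
        ∫ u in Set.Icc (0 : ℝ) 1, p u ∂L₂.measure) :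
    AntitoneOn p (Set.Icc 0 1) := by
  intro a ha b hb hab
  rcases eq_or_lt_of_le hab with rfl | hab'
  · exact le_rfl
  rcases eq_or_lt_of_le ha.1 with h0 | h0
  · -- a = 0
    have hb0 : (0:ℝ) < b := h0 ▸ hab'
    have hlim : Filter.Tendsto p (nhdsWithin a (Set.Ioc a b)) (nhds (p a)) := by
      apply (hp a ha).mono_left
      exact nhdsWithin_mono _ (fun x hx => ⟨(ha.1.trans hx.1.le), hx.2.trans hb.2⟩)
    have hne : (nhdsWithin a (Set.Ioc a b)).NeBot := by
      apply mem_closure_iff_nhdsWithin_neBot.1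
      rw [closure_Ioc hab'.ne]
      exact ⟨le_rfl, hab⟩
    refine ge_of_tendsto hlim ?_
    filter_upwards [self_mem_nhdsWithin] with x hx
    exact key_ineq p hmono (h0 ▸ hx.1) hx.2 hb.2
  · exact key_ineq p hmono h0 hab hb.2
end

section
/- Functional equation forcing logarithmic or power generators: let g : (0,∞) → ℝ be continuous and strictly monotonic, and suppose that for all X, K > 0 and weights s₁, s₂ > 0 with s₁+s₂=1 (fixed), g⁻¹(s₁g(KX₁) + s₂g(KX₂)) = K·g⁻¹(s₁g(X₁) + s₂g(X₂)) for all X₁, X₂, K > 0. Then either g(y) = c·log y + d for constants c ≠ 0, d, or g(y) = a·y^β + d for constants a ≠ 0, β ≠ 0, d. -/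
lemma abstract_max (s₁ s₂ : ℝ) (hs₁ : 0 < s₁) (hs₂ : 0 < s₂) (hs : s₁ + s₂ = 1)
    (x1 x2 : ℝ) (h12 : x1 < x2) (e : ℝ → ℝ)
    (hcont : ContinuousOn e (Set.Icc x1 x2))
    (he1 : e x1 = 0) (he2 : e x2 = 0)
    (hrel : ∀ t0 ∈ Set.Ioo x1 x2, ∃ x y, x ∈ Set.Icc x1 x2 ∧ y ∈ Set.Icc x1 x2 ∧
      x < t0 ∧ e t0 = s₁ * e x + s₂ * e y) :
    ∀ t ∈ Set.Icc x1 x2, e t ≤ 0 := by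
  obtain ⟨tm, htm, hmax⟩ := isCompact_Icc.exists_isMaxOn
    (Set.nonempty_Icc.2 h12.le) hcont
  set m := e tm with hm
  have hmax' : ∀ t ∈ Set.Icc x1 x2, e t ≤ m := fun t ht => hmax ht
  suffices hm0 : m ≤ 0 by
    intro t ht; exact (hmax' t ht).trans hm0
  by_contra hpos
  push_neg at hpos
  set A : Set ℝ := {t | t ∈ Set.Icc x1 x2 ∧ e t = m} with hA
  have hAclosed : IsClosed A := by
    have : A = Set.Icc x1 x2 ∩ e ⁻¹' {m} := by
      ext t; simp [hA]
    rw [this]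
    exact hcont.preimage_isClosed_of_isClosed isClosed_Icc isClosed_singleton
  have hAne : A.Nonempty := ⟨tm, htm, rfl⟩
  have hAbdd : BddBelow A := ⟨x1, fun t ht => ht.1.1⟩
  set t0 := sInf A with ht0def
  have ht0A : t0 ∈ A := hAclosed.csInf_mem hAne hAbdd
  have ht0Icc : t0 ∈ Set.Icc x1 x2 := ht0A.1
  have ht0m : e t0 = m := ht0A.2
  have ht0ne1 : t0 ≠ x1 := by
    intro h; rw [h, he1] at ht0m; linarith
  have ht0ne2 : t0 ≠ x2 := by
    intro h; rw [h, he2] at ht0m; linarith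
  have ht0Ioo : t0 ∈ Set.Ioo x1 x2 :=
    ⟨lt_of_le_of_ne ht0Icc.1 (Ne.symm ht0ne1), lt_of_le_of_ne ht0Icc.2 ht0ne2⟩
  obtain ⟨x, y, hx, hy, hxlt, heq⟩ := hrel t0 ht0Ioo
  have hex : e x ≤ m := hmax' x hx
  have hey : e y ≤ m := hmax' y hy
  have hexm : e x = m := by nlinarith
  have : t0 ≤ x := csInf_le hAbdd ⟨hx, hexm⟩
  linarith

lemma hrel_aux (g : ℝ → ℝ) (hcont : ContinuousOn g (Set.Ioi 0))
    (hmono : StrictMonoOn g (Set.Ioi 0))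
    (s₁ s₂ : ℝ) (hs₁ : 0 < s₁) (hs₂ : 0 < s₂) (hs : s₁ + s₂ = 1)
    (x1 x2 : ℝ) (h1 : 0 < x1) (t0 : ℝ) (ht0 : t0 ∈ Set.Ioo x1 x2) :
    ∃ x y, x ∈ Set.Icc x1 x2 ∧ y ∈ Set.Icc x1 x2 ∧ x < t0 ∧ 0 < x ∧ 0 < y ∧
      g t0 = s₁ * g x + s₂ * g y := by
  have h12 : x1 < x2 := ht0.1.trans ht0.2
  have ht0pos : 0 < t0 := h1.trans ht0.1
  have hx2pos : 0 < x2 := ht0pos.trans ht0.2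
  have hgt2 : g t0 < g x2 := hmono (Set.mem_Ioi.2 ht0pos) (Set.mem_Ioi.2 hx2pos) ht0.2
  set c0 : ℝ := (s₂ / s₁) * (g x2 - g t0) with hc0def
  have hc0 : 0 < c0 := mul_pos (div_pos hs₂ hs₁) (by linarith)
  have hct0 : ContinuousAt g t0 :=
    hcont.continuousAt (isOpen_Ioi.mem_nhds (Set.mem_Ioi.2 ht0pos))
  rw [Metric.continuousAt_iff] at hct0
  obtain ⟨δ, hδ, hδp⟩ := hct0 c0 hc0
  set x : ℝ := max x1 (t0 - δ / 2) with hxdef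
  have hxlt : x < t0 := by
    apply max_lt ht0.1; linarith
  have hx1le : x1 ≤ x := le_max_left _ _
  have hxpos : 0 < x := h1.trans_le hx1le
  have hxdist : dist x t0 < δ := by
    rw [Real.dist_eq, abs_of_nonpos (by linarith)]
    have : t0 - δ / 2 ≤ x := le_max_right _ _
    linarith
  have hgclose : |g x - g t0| < c0 := by
    have := hδp hxdist; rwa [Real.dist_eq] at this
  have hgxlt : g x < g t0 := hmono (Set.mem_Ioi.2 hxpos) (Set.mem_Ioi.2 ht0pos) hxlt
  have hexp : s₁ * g t0 + s₂ * g t0 = g t0 := by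
    rw [← add_mul, hs, one_mul]
  set v : ℝ := (g t0 - s₁ * g x) / s₂ with hvdef
  have hvgt : g t0 < v := by
    rw [hvdef, lt_div_iff₀ hs₂]
    nlinarith [mul_lt_mul_of_pos_left hgxlt hs₁, hexp]
  have hvle : v ≤ g x2 := by
    rw [hvdef, div_le_iff₀ hs₂]
    rw [abs_lt] at hgclose
    have h1' : g t0 - g x < c0 := by linarith
    have h2' : s₁ * (g t0 - g x) < s₁ * c0 := by nlinarith
    have hc0' : s₁ * c0 = s₂ * (g x2 - g t0) := by
      rw [hc0def]; field_simp
    nlinarith [h2', hc0', hexp]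
  have hsub : Set.Icc t0 x2 ⊆ Set.Ioi 0 := fun z hz => lt_of_lt_of_le ht0pos hz.1
  have hIVT := intermediate_value_Icc ht0.2.le (hcont.mono hsub)
  have hvmem : v ∈ g '' Set.Icc t0 x2 := hIVT ⟨hvgt.le, hvle⟩
  obtain ⟨y, hyIcc, hgy⟩ := hvmem
  have hypos : 0 < y := ht0pos.trans_le hyIcc.1
  refine ⟨x, y, ⟨hx1le, hxlt.le.trans ht0.2.le⟩, ⟨ht0.1.le.trans hyIcc.1, hyIcc.2⟩,
    hxlt, hxpos, hypos, ?_⟩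
  rw [hgy, hvdef]
  field_simp
  ring

lemma abstract_max' (s₁ s₂ : ℝ) (hs₁ : 0 < s₁) (hs₂ : 0 < s₂) (hs : s₁ + s₂ = 1)
    (x1 x2 : ℝ) (h12 : x1 < x2) (e : ℝ → ℝ)
    (hcont : ContinuousOn e (Set.Icc x1 x2))
    (he1 : e x1 = 0) (he2 : e x2 = 0)
    (hrel : ∀ t0 ∈ Set.Ioo x1 x2, ∃ x y, x ∈ Set.Icc x1 x2 ∧ y ∈ Set.Icc x1 x2 ∧
      x < t0 ∧ e t0 = s₁ * e x + s₂ * e y) :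
    ∀ t ∈ Set.Icc x1 x2, e t = 0 := by
  have hle := abstract_max s₁ s₂ hs₁ hs₂ hs x1 x2 h12 e hcont he1 he2 hrel
  have hge := abstract_max s₁ s₂ hs₁ hs₂ hs x1 x2 h12 (fun z => -(e z)) hcont.neg
    (by simp [he1]) (by simp [he2]) (by
      intro t0 ht0
      obtain ⟨x, y, hx, hy, hxlt, heq⟩ := hrel t0 ht0
      exact ⟨x, y, hx, hy, hxlt, by linarith⟩)
  intro t ht
  have h1 := hle t ht
  have h2 := hge t ht
  linarith

lemma affine_on_Icc (g : ℝ → ℝ) (hcont : ContinuousOn g (Set.Ioi 0))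
    (hmono : StrictMonoOn g (Set.Ioi 0))
    (s₁ s₂ : ℝ) (hs₁ : 0 < s₁) (hs₂ : 0 < s₂) (hs : s₁ + s₂ = 1)
    (hhom : ∀ X₁ X₂ K M : ℝ, 0 < X₁ → 0 < X₂ → 0 < K → 0 < M →
      g M = s₁ * g X₁ + s₂ * g X₂ →
      g (K * M) = s₁ * g (K * X₁) + s₂ * g (K * X₂))
    (K : ℝ) (hK : 0 < K) (x1 x2 : ℝ) (h1 : 0 < x1) (h12 : x1 < x2)
    (a b : ℝ) (ha1 : g (K * x1) = a * g x1 + b) (ha2 : g (K * x2) = a * g x2 + b) :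
    ∀ x ∈ Set.Icc x1 x2, g (K * x) = a * g x + b := by
  set e : ℝ → ℝ := fun x => g (K * x) - (a * g x + b) with hedef
  have hsub : Set.Icc x1 x2 ⊆ Set.Ioi 0 := fun z hz => lt_of_lt_of_le h1 hz.1
  have hKsub : ∀ z ∈ Set.Icc x1 x2, K * z ∈ Set.Ioi 0 := fun z hz =>
    Set.mem_Ioi.2 (mul_pos hK (hsub hz))
  have hconte : ContinuousOn e (Set.Icc x1 x2) := by
    apply ContinuousOn.sub
    · exact (hcont.comp ((continuous_const.mul continuous_id).continuousOn) hKsub)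
    · exact ((hcont.mono hsub).const_smul a).add continuousOn_const
  have hrel : ∀ t0 ∈ Set.Ioo x1 x2, ∃ x y, x ∈ Set.Icc x1 x2 ∧ y ∈ Set.Icc x1 x2 ∧
      x < t0 ∧ e t0 = s₁ * e x + s₂ * e y := by
    intro t0 ht0
    obtain ⟨x, y, hx, hy, hxlt, hxpos, hypos, hgeq⟩ :=
      hrel_aux g hcont hmono s₁ s₂ hs₁ hs₂ hs x1 x2 h1 t0 ht0
    have ht0pos : 0 < t0 := h1.trans ht0.1
    have hKeq := hhom x y K t0 hxpos hypos hK ht0pos hgeq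
    refine ⟨x, y, hx, hy, hxlt, ?_⟩
    simp only [hedef]
    linear_combination hKeq - a * hgeq + b * hs
  have := abstract_max' s₁ s₂ hs₁ hs₂ hs x1 x2 h12 e hconte
    (by simp [hedef, ha1]) (by simp [hedef, ha2]) hrel
  intro x hx
  have := this x hx
  simp only [hedef] at this
  linarith

noncomputable def aFun (g : ℝ → ℝ) (K : ℝ) : ℝ := (g (2 * K) - g K) / (g 2 - g 1)
noncomputable def bFun (g : ℝ → ℝ) (K : ℝ) : ℝ := g K - aFun g K * g 1

lemma global_affine (g : ℝ → ℝ) (hcont : ContinuousOn g (Set.Ioi 0))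
    (hmono : StrictMonoOn g (Set.Ioi 0))
    (s₁ s₂ : ℝ) (hs₁ : 0 < s₁) (hs₂ : 0 < s₂) (hs : s₁ + s₂ = 1)
    (hhom : ∀ X₁ X₂ K M : ℝ, 0 < X₁ → 0 < X₂ → 0 < K → 0 < M →
      g M = s₁ * g X₁ + s₂ * g X₂ →
      g (K * M) = s₁ * g (K * X₁) + s₂ * g (K * X₂))
    (K : ℝ) (hK : 0 < K) :
    ∀ x : ℝ, 0 < x → g (K * x) = aFun g K * g x + bFun g K := by
  have hg12 : g 1 < g 2 := hmono (by norm_num) (by norm_num) (by norm_num)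
  intro x hx
  set x1 : ℝ := min x 1 with hx1def
  set x2 : ℝ := max x 2 with hx2def
  have h1 : 0 < x1 := lt_min hx one_pos
  have hx1le1 : x1 ≤ 1 := min_le_right _ _
  have hx2ge2 : (2:ℝ) ≤ x2 := le_max_right _ _
  have h12 : x1 < x2 := by linarith
  have hx1pos := h1
  have hx2pos : 0 < x2 := h1.trans h12
  have hgne : g x1 < g x2 := hmono (Set.mem_Ioi.2 hx1pos) (Set.mem_Ioi.2 hx2pos) h12
  set a' : ℝ := (g (K * x2) - g (K * x1)) / (g x2 - g x1) with ha'def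
  set b' : ℝ := g (K * x1) - a' * g x1 with hb'def
  have hgsub : g x2 - g x1 ≠ 0 := by linarith
  have ha1 : g (K * x1) = a' * g x1 + b' := by rw [hb'def]; ring
  have ha2 : g (K * x2) = a' * g x2 + b' := by
    rw [hb'def, ha'def]
    field_simp
    ring
  clear_value a' b'
  have haff := affine_on_Icc g hcont hmono s₁ s₂ hs₁ hs₂ hs hhom K hK x1 x2 h1 h12
    a' b' ha1 ha2
  have he1 : g (K * 1) = a' * g 1 + b' := haff 1 ⟨hx1le1, by linarith⟩
  have he2 : g (K * 2) = a' * g 2 + b' := haff 2 ⟨by linarith, hx2ge2⟩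
  have hex : g (K * x) = a' * g x + b' := haff x ⟨min_le_left _ _, le_max_left _ _⟩
  have hK2 : K * 2 = 2 * K := by ring
  have hK1 : K * 1 = K := by ring
  rw [hK2] at he2; rw [hK1] at he1
  have hne21 : g 2 - g 1 ≠ 0 := by linarith
  have haeq : a' = aFun g K := by
    rw [aFun, eq_div_iff hne21]
    linear_combination he1 - he2
  have hbeq : b' = bFun g K := by
    rw [bFun, ← haeq]
    linarith
  rw [hex, haeq, hbeq]

lemma additive_linear (f : ℝ → ℝ) (hadd : ∀ t u : ℝ, f (t + u) = f t + f u)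
    (hcont : Continuous f) : ∀ t : ℝ, f t = f 1 * t := by
  have h0 : f 0 = 0 := by have := hadd 0 0; simp at this; linarith
  let φ : ℝ →+ ℝ := { toFun := f, map_zero' := h0, map_add' := hadd }
  have hL : ⇑(φ.toRealLinearMap hcont) = f := AddMonoidHom.coe_toRealLinearMap φ hcont
  intro t
  have h1 : f t = (φ.toRealLinearMap hcont) (t • (1:ℝ)) := by rw [hL]; simp
  rw [h1, map_smul]
  simp [hL, mul_comm]

lemma main_mono (g : ℝ → ℝ) (hcont : ContinuousOn g (Set.Ioi 0))
    (hmono : StrictMonoOn g (Set.Ioi 0))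
    (s₁ s₂ : ℝ) (hs₁ : 0 < s₁) (hs₂ : 0 < s₂) (hs : s₁ + s₂ = 1)
    (hhom : ∀ X₁ X₂ K M : ℝ, 0 < X₁ → 0 < X₂ → 0 < K → 0 < M →
      g M = s₁ * g X₁ + s₂ * g X₂ →
      g (K * M) = s₁ * g (K * X₁) + s₂ * g (K * X₂)) :
    (∃ c : ℝ, c ≠ 0 ∧ ∃ d : ℝ, ∀ y : ℝ, 0 < y → g y = c * Real.log y + d) ∨
    (∃ a : ℝ, a ≠ 0 ∧ ∃ β : ℝ, β ≠ 0 ∧ ∃ d : ℝ, ∀ y : ℝ, 0 < y →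
      g y = a * y ^ β + d) := by
  have hg12 : g 1 < g 2 := hmono (by norm_num) (by norm_num) (by norm_num)
  have hne21 : g 2 - g 1 ≠ 0 := by linarith
  have hglob : ∀ K : ℝ, 0 < K → ∀ x : ℝ, 0 < x →
      g (K * x) = aFun g K * g x + bFun g K := fun K hK =>
    global_affine g hcont hmono s₁ s₂ hs₁ hs₂ hs hhom K hK
  -- a K ≠ 0
  have hane : ∀ K : ℝ, 0 < K → aFun g K ≠ 0 := by
    intro K hK
    have h2K : g K < g (2 * K) := hmono (Set.mem_Ioi.2 hK)
      (Set.mem_Ioi.2 (by linarith)) (by linarith)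
    exact div_ne_zero (by linarith) hne21
  -- multiplicativity
  have hmulab : ∀ K L : ℝ, 0 < K → 0 < L →
      aFun g (K * L) = aFun g K * aFun g L ∧
      bFun g (K * L) = aFun g K * bFun g L + bFun g K := by
    intro K L hK hL
    have hKL : 0 < K * L := mul_pos hK hL
    have p1 := hglob (K * L) hKL 1 one_pos
    have p2 := hglob (K * L) hKL 2 two_pos
    have q1 : g (K * L * 1) = aFun g K * (aFun g L * g 1 + bFun g L) + bFun g K := by
      have h1 := hglob K hK (L * 1) (by linarith)
      rw [hglob L hL 1 one_pos] at h1
      rw [show K * L * 1 = K * (L * 1) by ring]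
      exact h1
    have q2 : g (K * L * 2) = aFun g K * (aFun g L * g 2 + bFun g L) + bFun g K := by
      have h1 := hglob K hK (L * 2) (by linarith)
      rw [hglob L hL 2 two_pos] at h1
      rw [show K * L * 2 = K * (L * 2) by ring]
      exact h1
    have key : (aFun g (K * L) - aFun g K * aFun g L) * (g 2 - g 1) = 0 := by
      linear_combination (p1 - q1) - (p2 - q2)
    have haeq : aFun g (K * L) = aFun g K * aFun g L := by
      rcases mul_eq_zero.1 key with h | h
      · linarith
      · exact absurd h hne21
    refine ⟨haeq, ?_⟩
    linear_combination q1 - p1 - g 1 * haeq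
  -- a 1 = 1
  have ha1 : aFun g 1 = 1 := by
    have h := (hmulab 1 1 one_pos one_pos).1
    rw [mul_one] at h
    have h2 : aFun g 1 * (aFun g 1 - 1) = 0 := by linear_combination -h
    rcases mul_eq_zero.1 h2 with h3 | h3
    · exact absurd h3 (hane 1 one_pos)
    · linarith
  have hb1 : bFun g 1 = 0 := by rw [bFun, ha1]; ring
  -- a K > 0
  have hapos : ∀ K : ℝ, 0 < K → 0 < aFun g K := by
    intro K hK
    have hr : 0 < Real.sqrt K := Real.sqrt_pos.2 hK
    have hrr : Real.sqrt K * Real.sqrt K = K := Real.mul_self_sqrt hK.le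
    have := (hmulab (Real.sqrt K) (Real.sqrt K) hr hr).1
    rw [hrr] at this
    rw [this]
    exact mul_self_pos.2 (hane _ hr)
  -- continuity of aFun, bFun
  have h2Kcont : ContinuousOn (fun K : ℝ => g (2 * K)) (Set.Ioi 0) := by
    apply hcont.comp ((continuous_const.mul continuous_id).continuousOn)
    intro z hz
    exact Set.mem_Ioi.2 (mul_pos two_pos hz)
  have hacont : ContinuousOn (aFun g) (Set.Ioi 0) := by
    have : ContinuousOn (fun K : ℝ => (g (2 * K) - g K) / (g 2 - g 1)) (Set.Ioi 0) :=
      (h2Kcont.sub hcont).div_const _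
    exact this
  have hbcont : ContinuousOn (bFun g) (Set.Ioi 0) :=
    hcont.sub (hacont.mul continuousOn_const)
  -- the multiplicative Cauchy equation for aFun
  have haexp : Continuous fun t : ℝ => aFun g (Real.exp t) :=
    hacont.comp_continuous Real.continuous_exp fun t => Set.mem_Ioi.2 (Real.exp_pos t)
  have hAcont : Continuous fun t : ℝ => Real.log (aFun g (Real.exp t)) :=
    haexp.log fun t => ne_of_gt (hapos _ (Real.exp_pos t))
  have hAadd : ∀ t u : ℝ, Real.log (aFun g (Real.exp (t + u))) =
      Real.log (aFun g (Real.exp t)) + Real.log (aFun g (Real.exp u)) := by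
    intro t u
    rw [Real.exp_add, (hmulab _ _ (Real.exp_pos t) (Real.exp_pos u)).1,
      Real.log_mul (hane _ (Real.exp_pos t)) (hane _ (Real.exp_pos u))]
  have hAlin := additive_linear _ hAadd hAcont
  set c : ℝ := Real.log (aFun g (Real.exp 1)) with hcdef
  have haK : ∀ K : ℝ, 0 < K → aFun g K = Real.exp (c * Real.log K) := by
    intro K hK
    have h1 : Real.log (aFun g (Real.exp (Real.log K))) = c * Real.log K :=
      hAlin (Real.log K)
    rw [Real.exp_log hK] at h1
    rw [← Real.exp_log (hapos K hK), h1]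
  by_cases hc : c = 0
  · -- logarithmic case
    have haone : ∀ K : ℝ, 0 < K → aFun g K = 1 := by
      intro K hK; rw [haK K hK, hc]; simp
    have hBadd : ∀ t u : ℝ, bFun g (Real.exp (t + u)) =
        bFun g (Real.exp t) + bFun g (Real.exp u) := by
      intro t u
      rw [Real.exp_add, (hmulab _ _ (Real.exp_pos t) (Real.exp_pos u)).2,
        haone _ (Real.exp_pos t), one_mul, add_comm]
    have hBcont : Continuous fun t : ℝ => bFun g (Real.exp t) :=
      hbcont.comp_continuous Real.continuous_exp fun t => Set.mem_Ioi.2 (Real.exp_pos t)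
    have hBlin := additive_linear _ hBadd hBcont
    set c' : ℝ := bFun g (Real.exp 1) with hc'def
    have hbK : ∀ K : ℝ, 0 < K → bFun g K = c' * Real.log K := by
      intro K hK
      have h1 := hBlin (Real.log K)
      rwa [Real.exp_log hK] at h1
    have hgy : ∀ y : ℝ, 0 < y → g y = c' * Real.log y + g 1 := by
      intro y hy
      have h1 := hglob y hy 1 one_pos
      rw [mul_one] at h1
      rw [h1, haone y hy, hbK y hy]
      ring
    have hc' : c' ≠ 0 := by
      intro h
      have h2 := hgy 2 two_pos
      rw [h] at h2
      simp at h2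
      linarith
    exact Or.inl ⟨c', hc', g 1, hgy⟩
  · -- power case
    have ha2ne1 : aFun g 2 - 1 ≠ 0 := by
      intro h
      have h1 : aFun g 2 = 1 := by linarith
      rw [haK 2 two_pos] at h1
      have h2 : c * Real.log 2 = 0 := (Real.exp_eq_one_iff _).1 h1
      have h3 : Real.log 2 ≠ 0 := ne_of_gt (Real.log_pos (by norm_num))
      rcases mul_eq_zero.1 h2 with h4 | h4
      · exact hc h4
      · exact h3 h4
    set d : ℝ := bFun g 2 / (aFun g 2 - 1) with hddef
    have hbK : ∀ K : ℝ, 0 < K → bFun g K = d * (aFun g K - 1) := by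
      intro K hK
      have e1 := (hmulab K 2 hK two_pos).2
      have e2 := (hmulab 2 K two_pos hK).2
      rw [show K * 2 = 2 * K by ring] at e1
      have key : bFun g K * (aFun g 2 - 1) = bFun g 2 * (aFun g K - 1) := by
        linear_combination e1 - e2
      rw [hddef]
      field_simp
      linear_combination key
    have hgy : ∀ y : ℝ, 0 < y → g y = (g 1 + d) * aFun g y - d := by
      intro y hy
      have h1 := hglob y hy 1 one_pos
      rw [mul_one] at h1
      rw [h1, hbK y hy]
      ring
    have ha0 : g 1 + d ≠ 0 := by
      intro h
      have h1 := hgy 1 one_pos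
      have h2 := hgy 2 two_pos
      rw [h] at h1 h2
      simp at h1 h2
      linarith
    refine Or.inr ⟨g 1 + d, ha0, c, hc, -d, ?_⟩
    intro y hy
    have h1 := hgy y hy
    rw [haK y hy] at h1
    rw [h1, Real.rpow_def_of_pos hy, mul_comm (Real.log y) c]
    ring

/-- Hardy–Littlewood–Pólya (Theorem 83): a continuous strictly monotone generator
g of a homogeneous quasi-arithmetic mean with fixed positive weights s₁ + s₂ = 1
must be (up to affine transformation) logarithmic or a power function. -/
theorem generator_log_or_power (g : ℝ → ℝ)
    (hcont : ContinuousOn g (Set.Ioi 0))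
    (hmono : StrictMonoOn g (Set.Ioi 0) ∨ StrictAntiOn g (Set.Ioi 0))
    (s₁ s₂ : ℝ) (hs₁ : 0 < s₁) (hs₂ : 0 < s₂) (hs : s₁ + s₂ = 1)
    (hhom : ∀ X₁ X₂ K M : ℝ, 0 < X₁ → 0 < X₂ → 0 < K → 0 < M →
      g M = s₁ * g X₁ + s₂ * g X₂ →
      g (K * M) = s₁ * g (K * X₁) + s₂ * g (K * X₂)) :
    (∃ c : ℝ, c ≠ 0 ∧ ∃ d : ℝ, ∀ y : ℝ, 0 < y → g y = c * Real.log y + d) ∨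
    (∃ a : ℝ, a ≠ 0 ∧ ∃ β : ℝ, β ≠ 0 ∧ ∃ d : ℝ, ∀ y : ℝ, 0 < y →
      g y = a * y ^ β + d) := by
  rcases hmono with hm | ha
  · exact main_mono g hcont hm s₁ s₂ hs₁ hs₂ hs hhom
  · have hm' : StrictMonoOn (fun y => -g y) (Set.Ioi 0) := fun x hx y hy hxy =>
      neg_lt_neg (ha hx hy hxy)
    have hcont' : ContinuousOn (fun y => -g y) (Set.Ioi 0) := hcont.neg
    have hhom' : ∀ X₁ X₂ K M : ℝ, 0 < X₁ → 0 < X₂ → 0 < K → 0 < M →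
        (fun y => -g y) M = s₁ * (fun y => -g y) X₁ + s₂ * (fun y => -g y) X₂ →
        (fun y => -g y) (K * M) = s₁ * (fun y => -g y) (K * X₁) +
          s₂ * (fun y => -g y) (K * X₂) := by
      intro X₁ X₂ K M h1 h2 h3 h4 h5
      simp only [] at h5 ⊢
      have hg : g M = s₁ * g X₁ + s₂ * g X₂ := by linarith
      have := hhom X₁ X₂ K M h1 h2 h3 h4 hg
      linarith
    rcases main_mono _ hcont' hm' s₁ s₂ hs₁ hs₂ hs hhom' with
      ⟨c, hc, d, hcd⟩ | ⟨a, haa, β, hβ, d, h⟩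
    · refine Or.inl ⟨-c, neg_ne_zero.2 hc, -d, fun y hy => ?_⟩
      have := hcd y hy
      linarith
    · refine Or.inr ⟨-a, neg_ne_zero.2 haa, β, hβ, -d, fun y hy => ?_⟩
      have := h y hy
      linarith
end

section
/- Power-law growth of equal-allocation fairness is the unique form compatible with the boundedness axiom: if h : ℕ → (0,∞) satisfies the multiplicative Cauchy equation h(mn) = h(m)h(n) for all m, n ≥ 1 and h is monotone, then h(n) = n^r for some real r; moreover then lim_{n→∞} h(n+1)/h(n) = 1. -/
open Filter

private lemma aux_hpow (h : ℕ → ℝ) (h1 : h 1 = 1)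
    (hmul : ∀ m n : ℕ, 1 ≤ m → 1 ≤ n → h (m * n) = h m * h n)
    {n : ℕ} (hn : 1 ≤ n) : ∀ k : ℕ, h (n ^ k) = h n ^ k := by
  intro k
  induction k with
  | zero => simpa using h1
  | succ k ih =>
      rw [pow_succ, pow_succ, hmul _ _ (Nat.one_le_pow _ _ hn) hn, ih]

private lemma aux_key (h : ℕ → ℝ)
    (hpos : ∀ n, 1 ≤ n → 0 < h n) (h1 : h 1 = 1)
    (hmul : ∀ m n : ℕ, 1 ≤ m → 1 ≤ n → h (m * n) = h m * h n)
    (hmono : ∀ m n : ℕ, 1 ≤ m → m ≤ n → h m ≤ h n)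
    {m n : ℕ} (hm : 2 ≤ m) (hn : 2 ≤ n) :
    Real.log (h m) * Real.log n = Real.log (h n) * Real.log m := by
  set a := Real.log (h m) with ha
  set b := Real.log (h n) with hb
  set M := Real.log (m : ℝ) with hM
  set L := Real.log (n : ℝ) with hL
  have hm1 : 1 ≤ m := by omega
  have hn1 : 1 ≤ n := by omega
  have hhm : 0 < h m := hpos m hm1
  have hhn : 0 < h n := hpos n hn1
  have hbnn : 0 ≤ b := Real.log_nonneg (by
    have := hmono 1 n le_rfl hn1; linarith [h1 ▸ this])
  have hLpos : 0 < L := by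
    rw [hL]; apply Real.log_pos; exact_mod_cast by omega
  -- main estimate for every k ≥ 1
  have key : ∀ k : ℕ, 1 ≤ k → |a * L - M * b| ≤ b * L / k := by
    intro k hk
    set t := Nat.log n (m ^ k) with ht
    have hmk1 : 1 ≤ m ^ k := Nat.one_le_pow _ _ hm1
    have hs1 : n ^ t ≤ m ^ k := Nat.pow_log_le_self n (by omega)
    have hs2 : m ^ k < n ^ (t + 1) := Nat.lt_pow_succ_log_self (by omega) _
    -- log h inequalities
    have hnt1 : 1 ≤ n ^ t := Nat.one_le_pow _ _ hn1
    have i1 : (t : ℝ) * b ≤ (k : ℝ) * a := by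
      have := hmono _ _ hnt1 hs1
      rw [aux_hpow h h1 hmul hn1, aux_hpow h h1 hmul hm1] at this
      have := Real.log_le_log (by positivity) this
      rwa [Real.log_pow, Real.log_pow] at this
    have i2 : (k : ℝ) * a ≤ ((t : ℝ) + 1) * b := by
      have := hmono _ _ hmk1 hs2.le
      rw [aux_hpow h h1 hmul hn1, aux_hpow h h1 hmul hm1] at this
      have := Real.log_le_log (by positivity) this
      rw [Real.log_pow, Real.log_pow] at this
      push_cast at this ⊢
      linarith
    -- log inequalities
    have i3 : (t : ℝ) * L ≤ (k : ℝ) * M := by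
      have : ((n : ℝ)) ^ t ≤ ((m : ℝ)) ^ k := by exact_mod_cast hs1
      have := Real.log_le_log (by positivity) this
      rwa [Real.log_pow, Real.log_pow] at this
    have i4 : (k : ℝ) * M ≤ ((t : ℝ) + 1) * L := by
      have : ((m : ℝ)) ^ k ≤ ((n : ℝ)) ^ (t + 1) := by exact_mod_cast hs2.le
      have := Real.log_le_log (by positivity) this
      rw [Real.log_pow, Real.log_pow] at this
      push_cast at this ⊢
      linarith
    have e1 : (t : ℝ) * b * L ≤ (k : ℝ) * a * L :=
      mul_le_mul_of_nonneg_right i1 hLpos.le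
    have e2 : (k : ℝ) * a * L ≤ ((t : ℝ) + 1) * b * L :=
      mul_le_mul_of_nonneg_right i2 hLpos.le
    have e3 : (t : ℝ) * L * b ≤ (k : ℝ) * M * b :=
      mul_le_mul_of_nonneg_right i3 hbnn
    have e4 : (k : ℝ) * M * b ≤ ((t : ℝ) + 1) * L * b :=
      mul_le_mul_of_nonneg_right i4 hbnn
    have habs : |(k : ℝ) * (a * L - M * b)| ≤ b * L := by
      rw [abs_le]
      constructor <;> nlinarith
    have hkpos : (0 : ℝ) < k := by exact_mod_cast hk
    rw [abs_mul, abs_of_pos hkpos, mul_comm] at habs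
    rw [le_div_iff₀ hkpos]
    exact habs
  -- conclude
  have h0 : |a * L - M * b| ≤ 0 := by
    have htend : Tendsto (fun k : ℕ => b * L / k) atTop (nhds 0) :=
      tendsto_const_div_atTop_nhds_zero_nat (b * L)
    exact ge_of_tendsto htend (eventually_atTop.2 ⟨1, fun k hk => key k hk⟩)
  have : a * L - M * b = 0 := abs_eq_zero.mp (le_antisymm h0 (abs_nonneg _))
  linarith [this]

/-- Erdős: a monotone completely multiplicative function h : ℕ → (0,∞) with
h(1) = 1 is a power function h(n) = n^r; consequently h(n+1)/h(n) → 1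
(the Boundedness axiom for equal-allocation fairness values). -/
theorem monotone_multiplicative_is_power (h : ℕ → ℝ)
    (hpos : ∀ n, 1 ≤ n → 0 < h n) (h1 : h 1 = 1)
    (hmul : ∀ m n : ℕ, 1 ≤ m → 1 ≤ n → h (m * n) = h m * h n)
    (hmono : ∀ m n : ℕ, 1 ≤ m → m ≤ n → h m ≤ h n) :
    ∃ r : ℝ, (∀ n : ℕ, 1 ≤ n → h n = (n : ℝ) ^ r) ∧
      Tendsto (fun n : ℕ => h (n + 1) / h n) atTop (nhds 1) := by
  set r := Real.log (h 2) / Real.log 2 with hr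
  have hlog2 : (0 : ℝ) < Real.log 2 := Real.log_pos (by norm_num)
  have hpow : ∀ n : ℕ, 1 ≤ n → h n = (n : ℝ) ^ r := by
    intro n hn
    rcases eq_or_lt_of_le hn with rfl | hn2
    · rw [h1]; norm_num
    · have hn2' : 2 ≤ n := hn2
      have hkey := aux_key h hpos h1 hmul hmono hn2' (le_refl 2)
      have hlogn : Real.log (h n) = r * Real.log n := by
        rw [hr]
        field_simp
        push_cast at hkey
        linarith [hkey]
      have hpos' : 0 < h n := hpos n hn
      rw [Real.rpow_def_of_pos (by positivity : (0:ℝ) < (n:ℝ)), mul_comm,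
        ← hlogn, Real.exp_log hpos']
  refine ⟨r, hpow, ?_⟩
  have heq : ∀ᶠ n : ℕ in atTop,
      ((1 + 1 / (n : ℝ)) ^ r) = h (n + 1) / h n := by
    filter_upwards [eventually_ge_atTop 1] with n hn
    have hn0 : (0 : ℝ) < n := by exact_mod_cast hn
    rw [hpow n hn, hpow (n + 1) (by omega)]
    rw [← Real.div_rpow (by positivity) (le_of_lt hn0)]
    congr 1
    push_cast
    field_simp
  have h1tend : Tendsto (fun n : ℕ => (1 + 1 / (n : ℝ))) atTop (nhds 1) := by
    have : Tendsto (fun n : ℕ => 1 / (n : ℝ)) atTop (nhds 0) := tendsto_one_div_atTop_nhds_zero_nat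
    simpa using (tendsto_const_nhds.add this :
      Tendsto (fun n : ℕ => (1 : ℝ) + 1 / n) atTop (nhds (1 + 0)))
  have hcont : Tendsto (fun x : ℝ => x ^ r) (nhds 1) (nhds 1) := by
    have := (Real.continuousAt_rpow_const 1 r (Or.inl one_ne_zero)).tendsto
    simpa using this
  exact (hcont.comp h1tend).congr' heq
end
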